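/- arXiv:cs/0601131 — 5 statements merged into one kernel-verified Lean document; each statement's English description precedes it below -/
import Mathlib

section
/- Let C_1,...,C_l be closed convex subsets of ℝ^m with nonempty intersection, and let x_{n+1} = P_{C_{(n mod l)+1}}(x_n). Then the sequence (x_n) converges to a point in the intersection ∩_{i=1}^l C_i. -/
open Filter Topology Finset

/-! The projection `p` of `y` onto a convex set containing `w` satisfies
`dist p w ^ 2 + dist y p ^ 2 ≤ dist y w ^ 2` (the angle at `p` is obtuse). Hence the distance from
the iterates to any point of `⋂ i, C i` is antitone, and the step lengths tend to zero. A
subsequence of the bounded iterates converges to some `y`; since every `l` consecutive steps visit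
every `C i` and the steps are short, `y` lies in each closed `C i`. The distance to `y` is then
antitone with a subsequence tending to zero, so the whole sequence converges to `y`. -/

/-- `p` is the least-squares (metric) projection of `y` onto `S`. -/
def IsProjOn {m : ℕ} (S : Set (EuclideanSpace ℝ (Fin m)))
    (y p : EuclideanSpace ℝ (Fin m)) : Prop :=
  p ∈ S ∧ ∀ z ∈ S, ‖y - p‖ ≤ ‖y - z‖

theorem dist_sq_add_dist_sq_le_of_forall_norm_sub_le {E : Type*} [NormedAddCommGroup E]
    [InnerProductSpace ℝ E] {S : Set E} (hS : Convex ℝ S) {y p w : E} (hp : p ∈ S)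
    (hmin : ∀ z ∈ S, ‖y - p‖ ≤ ‖y - z‖) (hw : w ∈ S) :
    dist p w ^ 2 + dist y p ^ 2 ≤ dist y w ^ 2 := by
  have : Nonempty S := ⟨⟨p, hp⟩⟩
  have hinf : ‖y - p‖ = ⨅ z : S, ‖y - z‖ :=
    le_antisymm (le_ciInf fun z => hmin z z.2)
      (ciInf_le (f := fun z : S => ‖y - z‖) ⟨0, by rintro _ ⟨z, rfl⟩; positivity⟩ ⟨p, hp⟩)
  have hinner := (norm_eq_iInf_iff_real_inner_le_zero hS hp).1 hinf w hw
  rw [dist_eq_norm, dist_eq_norm, dist_eq_norm, norm_sub_rev p w,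
    ← sub_sub_sub_cancel_right y w p, norm_sub_sq_real (y - p)]
  linarith

section PseudoMetricSpace

variable {α : Type*} [PseudoMetricSpace α] {x : ℕ → α} {w y : α} {φ : ℕ → ℕ}

theorem antitone_dist_of_dist_sq_add_dist_sq_le
    (h : ∀ n, dist (x (n + 1)) w ^ 2 + dist (x n) (x (n + 1)) ^ 2 ≤ dist (x n) w ^ 2) :
    Antitone fun n => dist (x n) w :=
  antitone_nat_of_succ_le fun n =>
    pow_le_pow_iff_left₀ dist_nonneg dist_nonneg two_ne_zero |>.1 <| by
      nlinarith [h n, sq_nonneg (dist (x n) (x (n + 1)))]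

theorem tendsto_dist_succ_of_dist_sq_add_dist_sq_le
    (h : ∀ n, dist (x (n + 1)) w ^ 2 + dist (x n) (x (n + 1)) ^ 2 ≤ dist (x n) w ^ 2) :
    Tendsto (fun n => dist (x n) (x (n + 1))) atTop (𝓝 0) := by
  have hanti : Antitone fun n => dist (x n) w ^ 2 := fun a b hab =>
    pow_le_pow_left₀ dist_nonneg (antitone_dist_of_dist_sq_add_dist_sq_le h hab) 2
  have hlim := tendsto_atTop_ciInf hanti ⟨0, by rintro _ ⟨n, rfl⟩; positivity⟩
  have hsq : Tendsto (fun n => dist (x n) (x (n + 1)) ^ 2) atTop (𝓝 0) := by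
    refine squeeze_zero (fun n => by positivity) (fun n => le_sub_iff_add_le'.2 (h n)) ?_
    simpa using hlim.sub (hlim.comp (tendsto_add_atTop_nat 1))
  simpa [Real.sqrt_sq dist_nonneg] using hsq.sqrt

theorem tendsto_of_antitone_dist_of_tendsto_subseq (hx : Antitone fun n => dist (x n) y)
    (hφ : Tendsto φ atTop atTop) (hy : Tendsto (x ∘ φ) atTop (𝓝 y)) :
    Tendsto x atTop (𝓝 y) := by
  rw [tendsto_iff_dist_tendsto_zero] at hy ⊢
  exact (tendsto_iff_tendsto_subseq_of_antitone hx hφ).2 hy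

theorem IsClosed.mem_of_tendsto_subseq_of_forall_exists_add_mem {S : Set α} (hS : IsClosed S)
    {l : ℕ} (hvisit : ∀ n, ∃ j ≤ l, x (n + j) ∈ S)
    (hsucc : Tendsto (fun n => dist (x n) (x (n + 1))) atTop (𝓝 0))
    (hφ : Tendsto φ atTop atTop) (hy : Tendsto (x ∘ φ) atTop (𝓝 y)) : y ∈ S := by
  choose j hjl hjS using hvisit
  have hwindow :
      Tendsto (fun n => ∑ t ∈ range l, dist (x (n + t)) (x (n + t + 1))) atTop (𝓝 0) := by
    simpa using tendsto_finsetSum (range l) fun t _ => hsucc.comp (tendsto_add_atTop_nat t)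
  have hjump : ∀ n,
      dist (x n) (x (n + j n)) ≤ ∑ t ∈ range l, dist (x (n + t)) (x (n + t + 1)) :=
    fun n => (dist_le_range_sum_dist (fun t => x (n + t)) (j n)).trans <|
      sum_le_sum_of_subset_of_nonneg (range_subset_range.2 (hjl n)) fun _ _ _ => dist_nonneg
  refine hS.mem_of_tendsto (hy.congr_dist ?_) (Eventually.of_forall fun k => hjS (φ k))
  exact squeeze_zero (fun _ => dist_nonneg) (fun k => hjump (φ k)) (hwindow.comp hφ)

end PseudoMetricSpace

theorem Nat.exists_lt_add_mod_eq {l i : ℕ} (hi : i < l) (n : ℕ) : ∃ j < l, (n + j) % l = i := by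
  refine ⟨(i + (l - n % l)) % l, Nat.mod_lt _ (by omega), ?_⟩
  have hn : n % l < l := Nat.mod_lt _ (by omega)
  have hsplit : n + (i + (l - n % l)) = i + l * (n / l + 1) := by
    have := Nat.mod_add_div n l
    rw [mul_add, mul_one]
    omega
  rw [Nat.add_mod_mod, hsplit, Nat.add_mul_mod_self_left, Nat.mod_eq_of_lt hi]

/-- Convergence of cyclic projections to a point of the intersection. -/
theorem cyclic_projections_converge {m l : ℕ} (hl : 0 < l)
    (C : Fin l → Set (EuclideanSpace ℝ (Fin m)))
    (hclosed : ∀ i, IsClosed (C i)) (hconv : ∀ i, Convex ℝ (C i))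
    (hne : (⋂ i, C i).Nonempty)
    (x : ℕ → EuclideanSpace ℝ (Fin m))
    (hstep : ∀ n, IsProjOn (C ⟨n % l, Nat.mod_lt n hl⟩) (x n) (x (n + 1))) :
    ∃ y ∈ ⋂ i, C i, Filter.Tendsto x Filter.atTop (nhds y) := by
  have hpyth : ∀ u ∈ ⋂ i, C i, ∀ n,
      dist (x (n + 1)) u ^ 2 + dist (x n) (x (n + 1)) ^ 2 ≤ dist (x n) u ^ 2 :=
    fun u hu n => dist_sq_add_dist_sq_le_of_forall_norm_sub_le (hconv _) (hstep n).1 (hstep n).2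
      (Set.mem_iInter.1 hu _)
  obtain ⟨w, hw⟩ := hne
  have hbdd : ∀ n, x n ∈ Metric.closedBall w (dist (x 0) w) :=
    fun n => antitone_dist_of_dist_sq_add_dist_sq_le (hpyth w hw) n.zero_le
  have hvisit : ∀ i n, ∃ j ≤ l, x (n + j) ∈ C i := by
    intro i n
    obtain ⟨j, hjl, hj⟩ := Nat.exists_lt_add_mod_eq i.isLt n
    refine ⟨j + 1, hjl, ?_⟩
    simpa [← add_assoc, Fin.ext_iff, hj] using (hstep (n + j)).1
  obtain ⟨y, -, φ, hφ, hy⟩ := tendsto_subseq_of_bounded Metric.isBounded_closedBall hbdd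
  have hyC : y ∈ ⋂ i, C i := Set.mem_iInter.2 fun i =>
    (hclosed i).mem_of_tendsto_subseq_of_forall_exists_add_mem (hvisit i)
      (tendsto_dist_succ_of_dist_sq_add_dist_sq_le (hpyth w hw)) hφ.tendsto_atTop hy
  exact ⟨y, hyC, tendsto_of_antitone_dist_of_tendsto_subseq
    (antitone_dist_of_dist_sq_add_dist_sq_le (hpyth y hyC)) hφ.tendsto_atTop hy⟩
end

section
/- Let C_1,...,C_l be affine subspaces (or closed linear subspaces) of ℝ^m with nonempty intersection C, and let x_{n+1} = P_{C_{(n mod l)+1}}(x_n) starting from x̂. Then x_n converges to P_C(x̂), the least-squares projection of x̂ onto the intersection. -/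
open Filter Topology
open scoped RealInnerProductSpace

def FejerMonotone {X : Type*} [PseudoMetricSpace X] (x : ℕ → X) (K : Set X) : Prop :=
  ∀ q ∈ K, ∀ n, dist (x (n + 1)) q ≤ dist (x n) q

namespace FejerMonotone

variable {X : Type*} [PseudoMetricSpace X] {x : ℕ → X} {K : Set X}

lemma mem_closedBall (hx : FejerMonotone x K) {q : X} (hq : q ∈ K) (n : ℕ) :
    x n ∈ Metric.closedBall q (dist (x 0) q) :=
  Metric.mem_closedBall.2 <|
    antitone_nat_of_succ_le (f := fun n => dist (x n) q) (hx q hq) (Nat.zero_le n)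

lemma tendsto_of_tendsto_comp (hx : FejerMonotone x K) {p : X} (hp : p ∈ K) {φ : ℕ → ℕ}
    (hφ : Tendsto φ atTop atTop) (hxφ : Tendsto (x ∘ φ) atTop (𝓝 p)) :
    Tendsto x atTop (𝓝 p) := by
  rw [tendsto_iff_dist_tendsto_zero] at hxφ ⊢
  have hlim : Tendsto (fun n => dist (x n) p) atTop (𝓝 (⨅ n, dist (x n) p)) :=
    tendsto_atTop_ciInf (antitone_nat_of_succ_le (hx p hp))
      ⟨0, by rintro _ ⟨n, rfl⟩; exact dist_nonneg⟩
  rwa [tendsto_nhds_unique (hlim.comp hφ) hxφ] at hlim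

end FejerMonotone

lemma tendsto_comp_add_of_tendsto_sub_succ {G : Type*} [AddGroup G] [TopologicalSpace G]
    [IsTopologicalAddGroup G] {x : ℕ → G} (hx : Tendsto (fun n => x (n + 1) - x n) atTop (𝓝 0))
    {ι : Type*} {f : Filter ι} {ψ : ι → ℕ} (hψ : Tendsto ψ f atTop) {p : G}
    (hxψ : Tendsto (fun j => x (ψ j)) f (𝓝 p)) (k : ℕ) :
    Tendsto (fun j => x (ψ j + k)) f (𝓝 p) := by
  induction k with
  | zero => exact hxψ
  | succ k ih =>
    simpa [← add_assoc] using (hx.comp ((tendsto_add_atTop_nat k).comp hψ)).add ih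

lemma Fin.mk_mul_add_mod {l : ℕ} (hl : 0 < l) (k : ℕ) (i : Fin l) :
    (⟨(k * l + i) % l, Nat.mod_lt _ hl⟩ : Fin l) = i :=
  Fin.ext (by simp [Nat.mod_eq_of_lt i.isLt])

section InnerProductSpace

variable {E : Type*} [NormedAddCommGroup E] [InnerProductSpace ℝ E]

lemma norm_sub_sq_eq_of_inner_sub_sub_eq_zero {y p z : E} (h : ⟪y - p, z - p⟫ = 0) :
    ‖y - z‖ ^ 2 = ‖y - p‖ ^ 2 + ‖z - p‖ ^ 2 := by
  simpa only [sub_sub_sub_cancel_right, sq] using norm_sub_sq_eq_norm_sq_add_norm_sq_real h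

-- A minimizer over a convex set makes an obtuse angle with every other point; in an affine
-- subspace the reflected point `2p - z` is available too, so the angle is right.
lemma AffineSubspace.inner_sub_sub_eq_zero_of_forall_norm_sub_le (A : AffineSubspace ℝ E)
    {y p z : E} (hp : p ∈ A) (hmin : ∀ w ∈ A, ‖y - p‖ ≤ ‖y - w‖) (hz : z ∈ A) :
    ⟪y - p, z - p⟫ = 0 := by
  have : Nonempty A := ⟨⟨p, hp⟩⟩
  have hleast : IsLeast (Set.range fun w : A => ‖y - w‖) ‖y - p‖ :=
    ⟨⟨⟨p, hp⟩, rfl⟩, by rintro _ ⟨w, rfl⟩; exact hmin w w.2⟩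
  have hinf : ‖y - p‖ = ⨅ w : A, ‖y - w‖ := hleast.isGLB.ciInf_eq.symm
  have hobtuse := (norm_eq_iInf_iff_real_inner_le_zero A.convex hp).1 hinf
  have hreflect := hobtuse _ (A.smul_vsub_vadd_mem (-1) hz hp hp)
  simp only [vsub_eq_sub, vadd_eq_add, neg_one_smul, add_sub_cancel_right, inner_neg_right]
    at hreflect
  linarith [hobtuse z hz]

lemma norm_sub_le_of_inner_sub_sub_eq_zero {y p z : E} (h : ⟪y - p, z - p⟫ = 0) :
    ‖y - p‖ ≤ ‖y - z‖ := by
  refine (pow_le_pow_iff_left₀ (norm_nonneg _) (norm_nonneg _) two_ne_zero).1 ?_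
  rw [norm_sub_sq_eq_of_inner_sub_sub_eq_zero h]
  exact le_add_of_nonneg_right (sq_nonneg _)

section OrthogonalSteps

variable {x : ℕ → E} {K : Set E}

lemma fejerMonotone_of_inner_eq_zero
    (horth : ∀ n, ∀ z ∈ K, ⟪x n - x (n + 1), z - x (n + 1)⟫ = 0) :
    FejerMonotone x K := by
  intro q hq n
  rw [dist_comm, dist_comm (x n), dist_eq_norm, dist_eq_norm]
  exact norm_sub_le_of_inner_sub_sub_eq_zero (by rw [real_inner_comm]; exact horth n q hq)

lemma tendsto_sub_succ_of_inner_eq_zero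
    (horth : ∀ n, ∀ z ∈ K, ⟪x n - x (n + 1), z - x (n + 1)⟫ = 0)
    (hK : K.Nonempty) :
    Tendsto (fun n => x (n + 1) - x n) atTop (𝓝 0) := by
  obtain ⟨q, hq⟩ := hK
  have htelescope : ∀ n, ‖x n - x (n + 1)‖ ^ 2 = ‖x n - q‖ ^ 2 - ‖x (n + 1) - q‖ ^ 2 := by
    intro n
    have h := norm_sub_sq_eq_of_inner_sub_sub_eq_zero (horth n q hq)
    rw [norm_sub_rev q] at h
    linarith
  have hsum : Summable fun n => ‖x n - x (n + 1)‖ ^ 2 :=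
    summable_of_sum_range_le (fun n => sq_nonneg _) fun N => by
      rw [Finset.sum_congr rfl fun n _ => htelescope n,
        Finset.sum_range_sub' (fun n => ‖x n - q‖ ^ 2)]
      exact sub_le_self _ (sq_nonneg _)
  rw [tendsto_zero_iff_norm_tendsto_zero]
  simpa [norm_sub_rev] using hsum.tendsto_atTop_zero.sqrt

lemma inner_sub_sub_eq_zero_of_inner_eq_zero
    (horth : ∀ n, ∀ z ∈ K, ⟪x n - x (n + 1), z - x (n + 1)⟫ = 0)
    {z q : E} (hz : z ∈ K) (hq : q ∈ K) (n : ℕ) :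
    ⟪x 0 - x n, z - q⟫ = 0 := by
  induction n with
  | zero => simp
  | succ n ih =>
    have hstep : ⟪x n - x (n + 1), z - q⟫ = 0 := by
      rw [← sub_sub_sub_cancel_right z q (x (n + 1)), inner_sub_right, horth n z hz,
        horth n q hq, sub_zero]
    rw [← sub_add_sub_cancel (x 0) (x n) (x (n + 1)), inner_add_left, ih, hstep, add_zero]

lemma inner_sub_sub_eq_zero_of_tendsto
    (horth : ∀ n, ∀ z ∈ K, ⟪x n - x (n + 1), z - x (n + 1)⟫ = 0)
    {p z q : E} (hx : Tendsto x atTop (𝓝 p)) (hz : z ∈ K) (hq : q ∈ K) :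
    ⟪x 0 - p, z - q⟫ = 0 :=
  (isClosed_eq (f := fun v => ⟪x 0 - v, z - q⟫) (by fun_prop) continuous_const).mem_of_tendsto hx
    (Eventually.of_forall (inner_sub_sub_eq_zero_of_inner_eq_zero horth hz hq))

theorem exists_tendsto_of_cyclic_inner_eq_zero [ProperSpace E] {l : ℕ} (hl : 0 < l)
    {C : Fin l → Set E} (hclosed : ∀ i, IsClosed (C i)) (hne : (⋂ i, C i).Nonempty)
    (hmem : ∀ n, x (n + 1) ∈ C ⟨n % l, Nat.mod_lt n hl⟩)
    (horth : ∀ n, ∀ z ∈ ⋂ i, C i, ⟪x n - x (n + 1), z - x (n + 1)⟫ = 0) :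
    ∃ p ∈ ⋂ i, C i, Tendsto x atTop (𝓝 p) := by
  obtain ⟨q, hq⟩ := hne
  have hfejer := fejerMonotone_of_inner_eq_zero horth
  obtain ⟨p, -, φ, hφ, hxφ⟩ := (isCompact_closedBall q _).tendsto_subseq
    fun j => hfejer.mem_closedBall hq (j * l)
  have hψ : Tendsto (fun j => φ j * l) atTop atTop :=
    tendsto_atTop_mono (fun j => Nat.le_mul_of_pos_right _ hl) hφ.tendsto_atTop
  have hdiff := tendsto_sub_succ_of_inner_eq_zero horth ⟨q, hq⟩
  have hp : p ∈ ⋂ i, C i := Set.mem_iInter.2 fun i =>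
    (hclosed i).mem_of_tendsto (tendsto_comp_add_of_tendsto_sub_succ hdiff hψ hxφ (i + 1))
      (Eventually.of_forall fun j => by
        simpa only [Fin.mk_mul_add_mod hl, ← add_assoc] using hmem (φ j * l + i))
  exact ⟨p, hp, hfejer.tendsto_of_tendsto_comp hp hψ hxφ⟩

end OrthogonalSteps

end InnerProductSpace

lemma IsProjOn.inner_sub_sub_eq_zero {m : ℕ} {S : Set (EuclideanSpace ℝ (Fin m))}
    (hS : ∃ A : AffineSubspace ℝ (EuclideanSpace ℝ (Fin m)), (A : Set _) = S)
    {y p z : EuclideanSpace ℝ (Fin m)} (h : IsProjOn S y p) (hz : z ∈ S) :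
    ⟪y - p, z - p⟫ = 0 := by
  obtain ⟨A, rfl⟩ := hS
  exact A.inner_sub_sub_eq_zero_of_forall_norm_sub_le h.1 h.2 hz

lemma isProjOn_of_inner_sub_sub_eq_zero {m : ℕ} {S : Set (EuclideanSpace ℝ (Fin m))}
    {y p : EuclideanSpace ℝ (Fin m)} (hp : p ∈ S) (h : ∀ z ∈ S, ⟪y - p, z - p⟫ = 0) :
    IsProjOn S y p :=
  ⟨hp, fun z hz => norm_sub_le_of_inner_sub_sub_eq_zero (h z hz)⟩

/-- Von Neumann–Halperin: for affine subspaces, cyclic projections converge to the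
projection of the starting point onto the intersection. -/
theorem cyclic_projections_affine_converge_to_proj {m l : ℕ} (hl : 0 < l)
    (C : Fin l → Set (EuclideanSpace ℝ (Fin m)))
    (haff : ∀ i, ∃ S : AffineSubspace ℝ (EuclideanSpace ℝ (Fin m)), (S : Set _) = C i)
    (hclosed : ∀ i, IsClosed (C i))
    (hne : (⋂ i, C i).Nonempty)
    (x : ℕ → EuclideanSpace ℝ (Fin m))
    (hstep : ∀ n, IsProjOn (C ⟨n % l, Nat.mod_lt n hl⟩) (x n) (x (n + 1))) :
    ∃ p, IsProjOn (⋂ i, C i) (x 0) p ∧ Filter.Tendsto x Filter.atTop (nhds p) := by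
  have horth : ∀ n, ∀ z ∈ ⋂ i, C i, ⟪x n - x (n + 1), z - x (n + 1)⟫ = 0 := fun n _ hz =>
    (hstep n).inner_sub_sub_eq_zero (haff _) (Set.mem_iInter.1 hz _)
  obtain ⟨p, hp, hx⟩ :=
    exists_tendsto_of_cyclic_inner_eq_zero hl hclosed hne (fun n => (hstep n).1) horth
  exact ⟨p, isProjOn_of_inner_sub_sub_eq_zero hp fun z hz =>
    inner_sub_sub_eq_zero_of_tendsto horth hx hz hp, hx⟩
end

section
/- (De Finetti-type theorem for the Brier score.) Let E_1,...,E_m be events over {0,1}^n, let C be the coherent set, and let x̂ ∈ [0,1]^m be an incoherent forecast vector (x̂ ∉ C). Then the coherent forecast p* = P_C(x̂) satisfies QP(p*, ω) < QP(x̂, ω) for every ω ∈ {0,1}^n, where QP(p, ω) = Σ_i (1_{E_i(ω)} − p_i)² is the Brier score under outcome ω. That is, projection onto the coherent set strictly improves Brier score under every realizable truth assignment. -/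
open scoped RealInnerProductSpace


def Coherent {n m : ℕ} (E : Fin m → (Fin n → Bool) → Bool) (p : Fin m → ℝ) : Prop :=
  ∃ μ : (Fin n → Bool) → ℝ, (∀ ω, 0 ≤ μ ω) ∧ (∑ ω, μ ω = 1) ∧
    ∀ i, p i = ∑ ω, if E i ω then μ ω else 0

/-- The Brier (quadratic penalty) score of forecast p under outcome ω. -/
def QP {n m : ℕ} (E : Fin m → (Fin n → Bool) → Bool) (p : Fin m → ℝ)
    (ω : Fin n → Bool) : ℝ :=
  ∑ i, ((if E i ω then (1 : ℝ) else 0) - p i) ^ 2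


lemma coherent_convex {n m : ℕ} (E : Fin m → (Fin n → Bool) → Bool) :
    Convex ℝ {p : EuclideanSpace ℝ (Fin m) | Coherent E p} := by
  rintro p ⟨μ, hμ0, hμ1, hμp⟩ q ⟨ν, hν0, hν1, hνq⟩ a b ha hb hab
  refine ⟨fun ω => a * μ ω + b * ν ω, fun ω => add_nonneg (mul_nonneg ha (hμ0 ω)) (mul_nonneg hb (hν0 ω)), ?_, fun i => ?_⟩
  · simp [Finset.sum_add_distrib, ← Finset.mul_sum, hμ1, hν1, hab]
  · have : (a • p + b • q) i = a * p i + b * q i := rfl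
    rw [this, hμp, hνq, Finset.mul_sum, Finset.mul_sum, ← Finset.sum_add_distrib]
    refine Finset.sum_congr rfl fun ω _ => ?_
    by_cases h : E i ω <;> simp [h]

lemma truth_coherent {n m : ℕ} (E : Fin m → (Fin n → Bool) → Bool) (ω : Fin n → Bool) :
    Coherent E (fun i => if E i ω then (1:ℝ) else 0) := by
  refine ⟨fun ω' => if ω' = ω then 1 else 0, fun ω' => by positivity, by simp, fun i => ?_⟩
  rw [Finset.sum_congr rfl (g := fun ω' => if ω' = ω then (if E i ω then (1:ℝ) else 0) else 0)
    (fun ω' _ => by by_cases h : ω' = ω <;> simp [h])]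
  simp


lemma qp_eq_norm_sq {n m : ℕ} (E : Fin m → (Fin n → Bool) → Bool)
    (p v : EuclideanSpace ℝ (Fin m)) (ω : Fin n → Bool)
    (hv : ∀ i, v i = if E i ω then (1:ℝ) else 0) :
    QP E p ω = ‖v - p‖ ^ 2 := by
  rw [EuclideanSpace.norm_eq, Real.sq_sqrt (by positivity)]
  refine Finset.sum_congr rfl fun i _ => ?_
  rw [Real.norm_eq_abs, sq_abs, PiLp.sub_apply, hv]

/-- De Finetti-type theorem: projecting an incoherent forecast onto the coherent
set strictly improves the Brier score under every realizable truth assignment. -/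
theorem deFinetti_brier {n m : ℕ} (E : Fin m → (Fin n → Bool) → Bool)
    (xhat : EuclideanSpace ℝ (Fin m)) (hbox : ∀ i, xhat i ∈ Set.Icc (0 : ℝ) 1)
    (hincoh : ¬ Coherent E xhat)
    (pstar : EuclideanSpace ℝ (Fin m))
    (hproj : IsProjOn {p : EuclideanSpace ℝ (Fin m) | Coherent E p} xhat pstar) :
    ∀ ω : Fin n → Bool, QP E pstar ω < QP E xhat ω := by
  intro ω
  obtain ⟨hpC, hmin⟩ := hproj
  haveI : Nonempty {p : EuclideanSpace ℝ (Fin m) | Coherent E p} := ⟨⟨pstar, hpC⟩⟩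
  have hinf : ‖xhat - pstar‖ =
      ⨅ w : {p : EuclideanSpace ℝ (Fin m) | Coherent E p}, ‖xhat - w‖ := by
    have hb : BddBelow (Set.range fun w : {p : EuclideanSpace ℝ (Fin m) | Coherent E p} =>
        ‖xhat - (w : EuclideanSpace ℝ (Fin m))‖) :=
      ⟨0, by rintro _ ⟨w, rfl⟩; exact norm_nonneg _⟩
    refine le_antisymm (le_ciInf fun w => hmin w w.2)
      (ciInf_le hb (⟨pstar, hpC⟩ : {p : EuclideanSpace ℝ (Fin m) | Coherent E p}))
  have hvar := (norm_eq_iInf_iff_real_inner_le_zero (coherent_convex E) hpC).mp hinf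
  obtain ⟨v, hvC, hvdef⟩ : ∃ v : EuclideanSpace ℝ (Fin m), Coherent E v ∧
      ∀ i, v i = if E i ω then (1:ℝ) else 0 :=
    ⟨(WithLp.equiv 2 _).symm fun i => if E i ω then (1:ℝ) else 0,
      truth_coherent E ω, fun i => rfl⟩
  have hne : pstar ≠ xhat := fun h => hincoh (h ▸ hpC)
  have hpos : (0:ℝ) < ‖pstar - xhat‖ ^ 2 := by
    have := norm_pos_iff.mpr (sub_ne_zero.mpr hne)
    positivity
  have hip : (0:ℝ) ≤ ⟪v - pstar, pstar - xhat⟫ := by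
    have h := hvar v hvC
    rw [show pstar - xhat = -(xhat - pstar) by abel, inner_neg_right, real_inner_comm]
    linarith
  calc QP E pstar ω = ‖v - pstar‖ ^ 2 := qp_eq_norm_sq E pstar v ω hvdef
    _ < ‖v - pstar‖ ^ 2 + (2 * ⟪v - pstar, pstar - xhat⟫ + ‖pstar - xhat‖ ^ 2) := by
        linarith
    _ = ‖(v - pstar) + (pstar - xhat)‖ ^ 2 := by rw [norm_add_sq_real]; ring
    _ = ‖v - xhat‖ ^ 2 := by rw [sub_add_sub_cancel]
    _ = QP E xhat ω := (qp_eq_norm_sq E xhat v ω hvdef).symm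
end

section
/- For three events p, q, p∧q over Boolean variables, a vector (a, b, c) ∈ [0,1]³ of forecasts for (p, q, p∧q) is probabilistically coherent if and only if c ≤ a, c ≤ b, and a + b − c ≤ 1, provided p, q, ¬p∧q, p∧¬q, ¬p∧¬q are all satisfiable (p and q are logically independent). -/
lemma sum_ite_point {n : ℕ} (E : (Fin n → Bool) → Bool) (x : Fin n → Bool) (v : ℝ) :
    ∑ ω, (if E ω then (if ω = x then v else 0) else 0) = if E x then v else 0 := by
  rw [Finset.sum_eq_single_of_mem x (Finset.mem_univ x)]
  · simp
  · intro b _ hb; simp [hb]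

lemma sum_ite_single {n : ℕ} (x : Fin n → Bool) (v : ℝ) :
    ∑ ω, (if ω = x then v else 0) = v := by
  rw [Finset.sum_eq_single_of_mem x (Finset.mem_univ x)]
  · simp
  · intro b _ hb; simp [hb]

/-- Coherence characterization for (p, q, p ∧ q) with logically independent p, q. -/
theorem conjunction_coherence_iff {n : ℕ} (P Q : (Fin n → Bool) → Bool)
    (hindep : ∀ u v : Bool, ∃ ω, P ω = u ∧ Q ω = v)
    (a b c : ℝ) (ha : a ∈ Set.Icc (0 : ℝ) 1) (hb : b ∈ Set.Icc (0 : ℝ) 1)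
    (hc : c ∈ Set.Icc (0 : ℝ) 1) :
    Coherent ![P, Q, fun ω => P ω && Q ω] ![a, b, c] ↔
      c ≤ a ∧ c ≤ b ∧ a + b - c ≤ 1 := by
  constructor
  · rintro ⟨μ, hpos, hsum, hp⟩
    have hA : a = ∑ ω, if P ω then μ ω else 0 := hp 0
    have hB : b = ∑ ω, if Q ω then μ ω else 0 := hp 1
    have hC : c = ∑ ω, if P ω && Q ω then μ ω else 0 := hp 2
    refine ⟨?_, ?_, ?_⟩
    · rw [hA, hC]
      apply Finset.sum_le_sum
      intro ω _
      rcases Bool.dichotomy (P ω) with h | h <;> rcases Bool.dichotomy (Q ω) with h' | h' <;>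
        simp [h, h', hpos ω]
    · rw [hB, hC]
      apply Finset.sum_le_sum
      intro ω _
      rcases Bool.dichotomy (P ω) with h | h <;> rcases Bool.dichotomy (Q ω) with h' | h' <;>
        simp [h, h', hpos ω]
    · rw [hA, hB, hC, ← hsum, ← Finset.sum_add_distrib, ← Finset.sum_sub_distrib]
      apply Finset.sum_le_sum
      intro ω _
      rcases Bool.dichotomy (P ω) with h | h <;> rcases Bool.dichotomy (Q ω) with h' | h' <;>
        simp [h, h', hpos ω]
  · rintro ⟨h1, h2, h3⟩
    obtain ⟨x11, hx11P, hx11Q⟩ := hindep true true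
    obtain ⟨x10, hx10P, hx10Q⟩ := hindep true false
    obtain ⟨x01, hx01P, hx01Q⟩ := hindep false true
    obtain ⟨x00, hx00P, hx00Q⟩ := hindep false false
    have ne1 : x11 ≠ x10 := by intro h; rw [h] at hx11Q; simp [hx10Q] at hx11Q
    have ne2 : x11 ≠ x01 := by intro h; rw [h] at hx11P; simp [hx01P] at hx11P
    have ne3 : x11 ≠ x00 := by intro h; rw [h] at hx11P; simp [hx00P] at hx11P
    have ne4 : x10 ≠ x01 := by intro h; rw [h] at hx10P; simp [hx01P] at hx10P
    have ne5 : x10 ≠ x00 := by intro h; rw [h] at hx10P; simp [hx00P] at hx10P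
    have ne6 : x01 ≠ x00 := by intro h; rw [h] at hx01Q; simp [hx00Q] at hx01Q
    have h4 : 0 ≤ 1 - a - b + c := by linarith
    refine ⟨fun ω => (if ω = x11 then c else 0) + (if ω = x10 then a - c else 0) +
      (if ω = x01 then b - c else 0) + (if ω = x00 then 1 - a - b + c else 0), ?_, ?_, ?_⟩
    · intro ω
      dsimp only
      split_ifs <;> linarith [hc.1, ha.1, hb.1]
    · simp only [Finset.sum_add_distrib, sum_ite_single]
      ring
    · have key : ∀ (E : (Fin n → Bool) → Bool),
          (∑ ω, if E ω then ((if ω = x11 then c else 0) + (if ω = x10 then a - c else 0) +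
            (if ω = x01 then b - c else 0) + (if ω = x00 then 1 - a - b + c else 0)) else 0)
          = (if E x11 then c else 0) + (if E x10 then a - c else 0) +
            (if E x01 then b - c else 0) + (if E x00 then 1 - a - b + c else 0) := by
        intro E
        rw [← sum_ite_point E x11 c, ← sum_ite_point E x10 (a - c),
          ← sum_ite_point E x01 (b - c), ← sum_ite_point E x00 (1 - a - b + c),
          ← Finset.sum_add_distrib, ← Finset.sum_add_distrib, ← Finset.sum_add_distrib]
        apply Finset.sum_congr rfl
        intro ω _
        rcases Bool.dichotomy (E ω) with h | h <;> simp [h]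
      intro i
      fin_cases i
      · show a = ∑ ω, if P ω then _ else 0
        rw [key P]
        simp [hx11P, hx10P, hx01P, hx00P]
      · show b = ∑ ω, if Q ω then _ else 0
        rw [key Q]
        simp [hx11Q, hx10Q, hx01Q, hx00Q]
      · show c = ∑ ω, if P ω && Q ω then _ else 0
        rw [key (fun ω => P ω && Q ω)]
        simp [hx11P, hx10P, hx01P, hx00P, hx11Q, hx10Q, hx01Q, hx00Q]
end

section
/- For two logically independent events p and q, a forecast (a, b, c) for (p, q, p∨q) is probabilistically coherent if and only if max(a, b) ≤ c ≤ min(1, a + b). -/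
/-!
Necessity: under any distribution `P ∪ Q` contains `P` and `Q`, lies in the whole space and is
covered by `P` and `Q`. Sufficiency: on the four atoms `P ∧ Q`, `P ∧ ¬Q`, `¬P ∧ Q`, `¬P ∧ ¬Q`
put the masses `a + b - c`, `c - b`, `c - a`, `1 - c`; logical independence means every atom is
inhabited, so these masses can be placed on chosen points of `{0,1}^n`.
-/

open Function

section Mass

variable {Ω : Type*} [Fintype Ω] {μ : Ω → ℝ}

theorem sum_ite_le_sum_ite_of_imp (hμ : ∀ ω, 0 ≤ μ ω) {E F : Ω → Bool}
    (hEF : ∀ ω, E ω → F ω) :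
    (∑ ω, if E ω then μ ω else 0) ≤ ∑ ω, if F ω then μ ω else 0 :=
  Finset.sum_le_sum fun ω _ => by
    by_cases hE : E ω
    · simp [hE, hEF ω hE]
    · rw [if_neg hE]
      exact ite_nonneg (hμ ω) le_rfl

theorem sum_ite_le_sum (hμ : ∀ ω, 0 ≤ μ ω) (E : Ω → Bool) :
    (∑ ω, if E ω then μ ω else 0) ≤ ∑ ω, μ ω := by
  simpa using sum_ite_le_sum_ite_of_imp hμ (F := fun _ => true) (by simp)

theorem sum_ite_or_le (hμ : ∀ ω, 0 ≤ μ ω) (E F : Ω → Bool) :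
    (∑ ω, if (E ω || F ω) then μ ω else 0) ≤
      (∑ ω, if E ω then μ ω else 0) + ∑ ω, if F ω then μ ω else 0 := by
  rw [← Finset.sum_add_distrib]
  refine Finset.sum_le_sum fun ω _ => ?_
  cases E ω <;> cases F ω <;> simp [hμ ω]

end Mass

theorem exists_nonneg_lift_of_surjective {Ω β : Type*} [Fintype Ω] [Fintype β] [DecidableEq Ω]
    {φ : Ω → β} (hφ : Surjective φ) {ν : β → ℝ} (hν : ∀ b, 0 ≤ ν b) :
    ∃ μ : Ω → ℝ, (∀ ω, 0 ≤ μ ω) ∧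
      ∀ G : β → Bool, (∑ ω, if G (φ ω) then μ ω else 0) = ∑ b, if G b then ν b else 0 := by
  set s := surjInv hφ
  refine ⟨fun ω => ∑ b, if ω = s b then ν b else 0,
    fun ω => Finset.sum_nonneg fun b _ => by split_ifs <;> simp [hν b], fun G => ?_⟩
  calc (∑ ω, if G (φ ω) then ∑ b, (if ω = s b then ν b else 0) else 0)
      = ∑ b, ∑ ω, if ω = s b then (if G (φ ω) then ν b else 0) else 0 := by
        rw [Finset.sum_comm]
        refine Finset.sum_congr rfl fun ω _ => ?_
        split_ifs <;> simp_all
    _ = ∑ b, if G b then ν b else 0 := by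
        simp [surjInv_eq hφ, s]

def disjunctionAtomMass (a b c : ℝ) : Bool × Bool → ℝ
  | (true, true) => a + b - c
  | (true, false) => c - b
  | (false, true) => c - a
  | (false, false) => 1 - c

theorem disjunctionAtomMass_nonneg {a b c : ℝ} (h : max a b ≤ c ∧ c ≤ min 1 (a + b))
    (x : Bool × Bool) : 0 ≤ disjunctionAtomMass a b c x := by
  obtain ⟨⟨hac, hbc⟩, hc1, hcab⟩ := And.imp max_le_iff.1 le_min_iff.1 h
  rcases x with ⟨_ | _, _ | _⟩ <;> simp only [disjunctionAtomMass] <;> linarith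

theorem disjunction_coherence_iff_general {n : ℕ} (P Q : (Fin n → Bool) → Bool)
    (hindep : ∀ u v : Bool, ∃ ω, P ω = u ∧ Q ω = v)
    (a b c : ℝ) :
    Coherent ![P, Q, fun ω => P ω || Q ω] ![a, b, c] ↔
      max a b ≤ c ∧ c ≤ min 1 (a + b) := by
  constructor
  · rintro ⟨μ, hμ, hμ1, hp⟩
    have ha := hp 0
    have hb := hp 1
    have hc := hp 2
    simp only [Fin.isValue, Matrix.cons_val] at ha hb hc
    refine ⟨max_le ?_ ?_, le_min ?_ ?_⟩
    · rw [ha, hc]; exact sum_ite_le_sum_ite_of_imp hμ fun ω h => by simp [h]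
    · rw [hb, hc]; exact sum_ite_le_sum_ite_of_imp hμ fun ω h => by simp [h]
    · rw [hc, ← hμ1]; exact sum_ite_le_sum hμ _
    · rw [ha, hb, hc]; exact sum_ite_or_le hμ P Q
  · intro h
    have hφ : Surjective fun ω => (P ω, Q ω) := fun ⟨u, v⟩ => by simpa using hindep u v
    obtain ⟨μ, hμ, hμG⟩ := exists_nonneg_lift_of_surjective hφ (disjunctionAtomMass_nonneg h)
    refine ⟨μ, hμ, ?_, fun i => ?_⟩
    · simpa [Fintype.sum_prod_type, disjunctionAtomMass] using hμG fun _ => true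
    · fin_cases i
      · simpa [Fintype.sum_prod_type, disjunctionAtomMass] using (hμG Prod.fst).symm
      · simpa [Fintype.sum_prod_type, disjunctionAtomMass] using (hμG Prod.snd).symm
      · simpa [Fintype.sum_prod_type, disjunctionAtomMass] using (hμG fun x => x.1 || x.2).symm

/-- Coherence characterization for (p, q, p ∨ q) with logically independent p, q. -/
theorem disjunction_coherence_iff {n : ℕ} (P Q : (Fin n → Bool) → Bool)
    (hindep : ∀ u v : Bool, ∃ ω, P ω = u ∧ Q ω = v)
    (a b c : ℝ) (ha : a ∈ Set.Icc (0 : ℝ) 1) (hb : b ∈ Set.Icc (0 : ℝ) 1)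
    (hc : c ∈ Set.Icc (0 : ℝ) 1) :
    Coherent ![P, Q, fun ω => P ω || Q ω] ![a, b, c] ↔
      max a b ≤ c ∧ c ≤ min 1 (a + b) :=
  disjunction_coherence_iff_general P Q hindep a b c
end
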